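/- Consider the linear system Ax = b where A ∈ ℝ^{N×N} is symmetric positive definite with distinct eigenvalues 0 < λ_1 < ... < λ_N and orthonormal eigenvectors v_1, ..., v_N. Let the iterates be generated by the minimal gradient (MG) method x_{n+1} = x_n − α_n^MG g_n, where g_n = A x_n − b and α_n^MG = (g_nᵀ A g_n)/(g_nᵀ A² g_n). Write g_n = Σ_{i=1}^N ζ_{i,n} v_i and assume ζ_{1,0} ≠ 0 and ζ_{N,0} ≠ 0 (hence g_n ≠ 0 for all n). Define α_n^Y2 = 2 (√((1/α_{n−1}^MG − 1/α_n^MG)² + 4 (g_nᵀ A g_n)/((α_{n−1}^MG)² g_{n−1}ᵀ A g_{n−1})) + 1/α_{n−1}^MG + 1/α_n^MG)^{−1}. Then lim_{n→∞} α_n^Y2 = 1/λ_N. -/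

import Mathlib

open Filter Topology Matrix

set_option maxHeartbeats 1000000

theorem mgY2_aux (N : ℕ) (hN : 2 ≤ N) (lam : Fin N → ℝ)
    (hmono : StrictMono lam) (hpos : ∀ i, 0 < lam i)
    (z : ℕ → Fin N → ℝ)
    (hrec : ∀ n i, z (n + 1) i =
      (1 - (∑ j, lam j * z n j ^ 2) / (∑ j, lam j ^ 2 * z n j ^ 2) * lam i) * z n i)
    (hz1 : z 0 ⟨0, Nat.lt_of_lt_of_le (by norm_num) hN⟩ ≠ 0)
    (hzN : z 0 ⟨N - 1, Nat.sub_lt (Nat.lt_of_lt_of_le (by norm_num) hN) Nat.one_pos⟩ ≠ 0)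
    (a : ℕ → ℝ)
    (ha : ∀ n, a n = (∑ j, lam j * z n j ^ 2) / (∑ j, lam j ^ 2 * z n j ^ 2))
    (G : ℕ → ℝ) (hG : ∀ n, G n = ∑ j, lam j * z n j ^ 2) :
    Filter.Tendsto (fun n => 2 * (Real.sqrt ((1 / a (n - 1) - 1 / a n) ^ 2 +
          4 * G n / ((a (n - 1)) ^ 2 * G (n - 1))) +
        1 / a (n - 1) + 1 / a n)⁻¹) Filter.atTop
      (nhds (1 / lam ⟨N - 1, Nat.sub_lt (Nat.lt_of_lt_of_le (by norm_num) hN) Nat.one_pos⟩)) := by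
  have h0N : (0:ℕ) < N := by omega
  have hN1 : N - 1 < N := by omega
  set i0 : Fin N := ⟨0, h0N⟩ with hi0def
  set iN : Fin N := ⟨N - 1, hN1⟩ with hiNdef
  set l1 : ℝ := lam i0 with hl1def
  set lN : ℝ := lam iN with hlNdef
  have hi0N : i0 < iN := by
    rw [Fin.lt_def]; simp only [hi0def, hiNdef]; omega
  have hl1N : l1 < lN := hmono hi0N
  have hd : 0 < lN - l1 := by linarith
  have hl1pos : 0 < l1 := hpos i0
  have hrange : ∀ i, l1 ≤ lam i ∧ lam i ≤ lN := by
    intro i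
    constructor
    · exact hmono.monotone (by simp only [hi0def, Fin.le_def, Fin.val_mk]; omega)
    · exact hmono.monotone (by
        simp only [hiNdef, Fin.le_def, Fin.val_mk]
        have := i.isLt; omega)
  -- moments
  obtain ⟨M0, hM0⟩ : ∃ f : ℕ → ℝ, ∀ n, f n = ∑ j, lam j * z n j ^ 2 := ⟨_, fun _ => rfl⟩
  obtain ⟨M1, hM1⟩ : ∃ f : ℕ → ℝ, ∀ n, f n = ∑ j, lam j ^ 2 * z n j ^ 2 := ⟨_, fun _ => rfl⟩
  obtain ⟨M2, hM2⟩ : ∃ f : ℕ → ℝ, ∀ n, f n = ∑ j, lam j ^ 3 * z n j ^ 2 := ⟨_, fun _ => rfl⟩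
  obtain ⟨M3, hM3⟩ : ∃ f : ℕ → ℝ, ∀ n, f n = ∑ j, lam j ^ 4 * z n j ^ 2 := ⟨_, fun _ => rfl⟩
  -- basic facts under nonvanishing
  have basic : ∀ n, z n i0 ≠ 0 → z n iN ≠ 0 →
      0 < M0 n ∧ 0 < M1 n ∧ l1 * M0 n < M1 n ∧ M1 n < lN * M0 n := by
    intro n h1 hNn
    have hterm0 : ∀ j, (0:ℝ) ≤ lam j * z n j ^ 2 := fun j => mul_nonneg (hpos j).le (sq_nonneg _)
    have hterm1 : ∀ j, (0:ℝ) ≤ lam j ^ 2 * z n j ^ 2 := fun j => mul_nonneg (sq_nonneg _) (sq_nonneg _)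
    have hM0pos : 0 < M0 n := by
      rw [hM0]
      apply Finset.sum_pos' (fun j _ => hterm0 j)
      exact ⟨iN, Finset.mem_univ _, mul_pos (hpos iN) (pow_two_pos_of_ne_zero hNn)⟩
    have hM1pos : 0 < M1 n := by
      rw [hM1]
      apply Finset.sum_pos' (fun j _ => hterm1 j)
      exact ⟨iN, Finset.mem_univ _, mul_pos (pow_pos (hpos iN) 2) (pow_two_pos_of_ne_zero hNn)⟩
    refine ⟨hM0pos, hM1pos, ?_, ?_⟩
    · have hdiff : M1 n - l1 * M0 n = ∑ j, (lam j - l1) * (lam j * z n j ^ 2) := by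
        rw [hM0, hM1, Finset.mul_sum, ← Finset.sum_sub_distrib]
        exact Finset.sum_congr rfl fun j _ => by ring
      have hposd : 0 < ∑ j, (lam j - l1) * (lam j * z n j ^ 2) := by
        apply Finset.sum_pos' (fun j _ => by
          have := (hrange j).1
          have := hterm0 j
          nlinarith)
        refine ⟨iN, Finset.mem_univ _, ?_⟩
        have : 0 < lam iN * z n iN ^ 2 := mul_pos (hpos iN) (pow_two_pos_of_ne_zero hNn)
        nlinarith
      linarith
    · have hdiff : lN * M0 n - M1 n = ∑ j, (lN - lam j) * (lam j * z n j ^ 2) := by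
        rw [hM0, hM1, Finset.mul_sum, ← Finset.sum_sub_distrib]
        exact Finset.sum_congr rfl fun j _ => by ring
      have hposd : 0 < ∑ j, (lN - lam j) * (lam j * z n j ^ 2) := by
        apply Finset.sum_pos' (fun j _ => by
          have := (hrange j).2
          have := hterm0 j
          nlinarith)
        refine ⟨i0, Finset.mem_univ _, ?_⟩
        have : 0 < lam i0 * z n i0 ^ 2 := mul_pos (hpos i0) (pow_two_pos_of_ne_zero h1)
        nlinarith
      linarith
  -- persistence
  have persist : ∀ n, z n i0 ≠ 0 ∧ z n iN ≠ 0 := by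
    intro n
    induction n with
    | zero => exact ⟨hz1, hzN⟩
    | succ k ih =>
      obtain ⟨h1, hNn⟩ := ih
      obtain ⟨hM0pos, hM1pos, hb1, hbN⟩ := basic k h1 hNn
      have hM0k : (∑ j, lam j * z k j ^ 2) = M0 k := (hM0 k).symm
      have hM1k : (∑ j, lam j ^ 2 * z k j ^ 2) = M1 k := (hM1 k).symm
      constructor
      · rw [hrec k i0, hM0k, hM1k]
        have hfac : 1 - M0 k / M1 k * l1 = (M1 k - l1 * M0 k) / M1 k := by
          field_simp
        have : 0 < 1 - M0 k / M1 k * l1 := by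
          rw [hfac]
          exact div_pos (by linarith) hM1pos
        exact mul_ne_zero (ne_of_gt this) h1
      · rw [hrec k iN, hM0k, hM1k]
        have hfac : 1 - M0 k / M1 k * lN = (M1 k - lN * M0 k) / M1 k := by
          field_simp
        have : 1 - M0 k / M1 k * lN < 0 := by
          rw [hfac]
          apply div_neg_of_neg_of_pos _ hM1pos
          linarith
        exact mul_ne_zero (ne_of_lt this) hNn

  -- global facts
  have hM0pos : ∀ n, 0 < M0 n := fun n => (basic n (persist n).1 (persist n).2).1
  have hM1pos : ∀ n, 0 < M1 n := fun n => (basic n (persist n).1 (persist n).2).2.1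
  have hb1 : ∀ n, l1 * M0 n < M1 n := fun n => (basic n (persist n).1 (persist n).2).2.2.1
  have hbN : ∀ n, M1 n < lN * M0 n := fun n => (basic n (persist n).1 (persist n).2).2.2.2
  obtain ⟨p, hp⟩ : ∃ f : ℕ → ℝ, ∀ n, f n = M1 n / M0 n := ⟨_, fun _ => rfl⟩
  have hp1 : ∀ n, l1 < p n := fun n => by
    rw [hp]; exact (lt_div_iff₀ (hM0pos n)).2 (by linarith [hb1 n])
  have hpN : ∀ n, p n < lN := fun n => by
    rw [hp]; exact (div_lt_iff₀ (hM0pos n)).2 (by linarith [hbN n])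
  have hppos : ∀ n, 0 < p n := fun n => lt_trans hl1pos (hp1 n)
  have hpMul : ∀ n, p n * M0 n = M1 n := fun n => by
    rw [hp]; exact div_mul_cancel₀ _ (ne_of_gt (hM0pos n))
  -- expansion engine
  have expand2 : ∀ (n : ℕ) (c : ℝ),
      (∑ j, (lam j * z n j ^ 2) * (lam j - c) ^ 2) = M2 n - 2 * c * M1 n + c ^ 2 * M0 n := by
    intro n c
    rw [hM0, hM1, hM2, Finset.mul_sum, Finset.mul_sum, ← Finset.sum_sub_distrib,
      ← Finset.sum_add_distrib]
    exact Finset.sum_congr rfl fun j _ => by ring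
  have expand3 : ∀ (n : ℕ) (c : ℝ),
      (∑ j, (lam j * z n j ^ 2) * ((lam j - c) ^ 2 * lam j)) =
        M3 n - 2 * c * M2 n + c ^ 2 * M1 n := by
    intro n c
    rw [hM1, hM2, hM3, Finset.mul_sum, Finset.mul_sum, ← Finset.sum_sub_distrib,
      ← Finset.sum_add_distrib]
    exact Finset.sum_congr rfl fun j _ => by ring
  obtain ⟨Y0, hY0⟩ : ∃ f : ℕ → ℝ, ∀ n,
      f n = M2 n - 2 * p n * M1 n + (p n) ^ 2 * M0 n := ⟨_, fun _ => rfl⟩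
  obtain ⟨Y1, hY1⟩ : ∃ f : ℕ → ℝ, ∀ n,
      f n = M3 n - 2 * p n * M2 n + (p n) ^ 2 * M1 n := ⟨_, fun _ => rfl⟩
  have hY0sum : ∀ n, Y0 n = ∑ j, (lam j * z n j ^ 2) * (lam j - p n) ^ 2 := fun n => by
    rw [hY0, expand2]
  have hY1sum : ∀ n, Y1 n = ∑ j, (lam j * z n j ^ 2) * ((lam j - p n) ^ 2 * lam j) := fun n => by
    rw [hY1, expand3]
  obtain ⟨DD, hDD⟩ : ∃ f : ℕ → ℝ, ∀ n,
      f n = ∑ j, (lam j * z n j ^ 2) * ((lam j - l1) * (lN - lam j)) := ⟨_, fun _ => rfl⟩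
  obtain ⟨Z0, hZ0⟩ : ∃ f : ℕ → ℝ, ∀ n,
      f n = ∑ j, (lam j * z n j ^ 2) * (lam j - l1) ^ 2 := ⟨_, fun _ => rfl⟩
  obtain ⟨Z1, hZ1⟩ : ∃ f : ℕ → ℝ, ∀ n,
      f n = ∑ j, (lam j * z n j ^ 2) * ((lam j - l1) ^ 2 * lam j) := ⟨_, fun _ => rfl⟩
  have hwnn : ∀ n j, (0:ℝ) ≤ lam j * z n j ^ 2 := fun n j => mul_nonneg (hpos j).le (sq_nonneg _)
  have hDDnonneg : ∀ n, 0 ≤ DD n := fun n => by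
    rw [hDD]
    apply Finset.sum_nonneg
    intro j _
    have h1 := (hrange j).1
    have h2 := (hrange j).2
    exact mul_nonneg (hwnn n j) (mul_nonneg (by linarith) (by linarith))
  have hDDclosed : ∀ n, DD n = (l1 + lN) * M1 n - M2 n - l1 * lN * M0 n := by
    intro n
    rw [hDD, hM0, hM1, hM2, Finset.mul_sum, Finset.mul_sum, ← Finset.sum_sub_distrib,
      ← Finset.sum_sub_distrib]
    exact Finset.sum_congr rfl fun j _ => by ring
  have hZ0closed : ∀ n, Z0 n = M2 n - 2 * l1 * M1 n + l1 ^ 2 * M0 n := fun n => by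
    rw [hZ0, expand2]
  have hZ1closed : ∀ n, Z1 n = M3 n - 2 * l1 * M2 n + l1 ^ 2 * M1 n := fun n => by
    rw [hZ1, expand3]
  -- recurrence transfer
  have hrec' : ∀ n j, z (n + 1) j = (1 - M0 n / M1 n * lam j) * z n j := by
    intro n j
    rw [hrec n j, ← hM0 n, ← hM1 n]
  have hM0next : ∀ n, M0 (n + 1) =
      M0 n - 2 * (M0 n / M1 n) * M1 n + (M0 n / M1 n) ^ 2 * M2 n := by
    intro n
    rw [hM0 (n + 1)]
    simp_rw [hrec']
    rw [hM0 n, hM1, hM2, Finset.mul_sum, Finset.mul_sum, ← Finset.sum_sub_distrib,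
      ← Finset.sum_add_distrib]
    exact Finset.sum_congr rfl fun j _ => by ring
  have hM1next : ∀ n, M1 (n + 1) =
      M1 n - 2 * (M0 n / M1 n) * M2 n + (M0 n / M1 n) ^ 2 * M3 n := by
    intro n
    rw [hM1 (n + 1)]
    simp_rw [hrec']
    rw [hM1 n, hM2, hM3, Finset.mul_sum, Finset.mul_sum, ← Finset.sum_sub_distrib,
      ← Finset.sum_add_distrib]
    exact Finset.sum_congr rfl fun j _ => by ring
  -- key algebraic identities
  have hY0M : ∀ n, Y0 n = p n ^ 2 * M0 (n + 1) := by
    intro n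
    have h0 := ne_of_gt (hM0pos n)
    have h1 := ne_of_gt (hM1pos n)
    rw [hY0 n, hM0next n, hp n]
    field_simp
    ring
  have hY1M : ∀ n, Y1 n = p n ^ 2 * M1 (n + 1) := by
    intro n
    have h0 := ne_of_gt (hM0pos n)
    have h1 := ne_of_gt (hM1pos n)
    rw [hY1 n, hM1next n, hp n]
    field_simp
    ring
  have hY0pos : ∀ n, 0 < Y0 n := fun n => by
    rw [hY0M n]
    exact mul_pos (pow_pos (hppos n) 2) (hM0pos (n + 1))
  have hqY : ∀ n, p (n + 1) * Y0 n = Y1 n := by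
    intro n
    have h0 := ne_of_gt (hM0pos (n + 1))
    rw [hY0M n, hY1M n, hp (n + 1)]
    field_simp
  have hDDid : ∀ n, DD n = (p n - l1) * (lN - p n) * M0 n - Y0 n := by
    intro n
    have h0 := ne_of_gt (hM0pos n)
    rw [hDDclosed n, hY0 n, hp n]
    field_simp
    ring
  have hBh : ∀ n, Y0 n ≤ (p n - l1) * (lN - p n) * M0 n := fun n => by
    have h1 := hDDnonneg n
    have h2 := hDDid n
    linarith
  -- Cauchy-Schwarz
  have hCS : ∀ n, (Y0 n) ^ 2 ≤ (M0 n * (lN - p n)) * (lN * Y0 n - Y1 n) := by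
    intro n
    set f : Fin N → ℝ := fun j => Real.sqrt ((lam j * z n j ^ 2) * (lN - lam j)) with hfdef
    have hf2 : ∀ j, f j ^ 2 = (lam j * z n j ^ 2) * (lN - lam j) := fun j =>
      Real.sq_sqrt (mul_nonneg (hwnn n j) (by linarith [(hrange j).2]))
    have key := Finset.sum_mul_sq_le_sq_mul_sq Finset.univ f (fun j => f j * (lam j - p n))
    have e1 : (∑ j, f j * (f j * (lam j - p n))) = -(Y0 n) := by
      have e1a : (∑ j, f j * (f j * (lam j - p n))) =
          ∑ j, ((lam j * z n j ^ 2) * (lN - lam j)) * (lam j - p n) := by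
        refine Finset.sum_congr rfl fun j _ => ?_
        rw [← hf2 j]; ring
      have e1b : (∑ j, ((lam j * z n j ^ 2) * (lN - lam j)) * (lam j - p n)) =
          (lN + p n) * M1 n - M2 n - lN * p n * M0 n := by
        rw [hM0, hM1, hM2, Finset.mul_sum, Finset.mul_sum, ← Finset.sum_sub_distrib,
          ← Finset.sum_sub_distrib]
        exact Finset.sum_congr rfl fun j _ => by ring
      rw [e1a, e1b, hY0 n]
      linear_combination (p n - lN) * hpMul n
    have e2 : (∑ j, f j ^ 2) = lN * M0 n - M1 n := by
      simp_rw [hf2]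
      rw [hM0, hM1, Finset.mul_sum, ← Finset.sum_sub_distrib]
      exact Finset.sum_congr rfl fun j _ => by ring
    have e3 : (∑ j, (f j * (lam j - p n)) ^ 2) = lN * Y0 n - Y1 n := by
      have e3a : ∀ j, (f j * (lam j - p n)) ^ 2 =
          ((lam j * z n j ^ 2) * (lN - lam j)) * (lam j - p n) ^ 2 := fun j => by
        rw [mul_pow, hf2 j]
      simp_rw [e3a]
      rw [hY0sum, hY1sum, Finset.mul_sum, ← Finset.sum_sub_distrib]
      exact Finset.sum_congr rfl fun j _ => by ring
    rw [e1, e2, e3] at key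
    have e4 : lN * M0 n - M1 n = M0 n * (lN - p n) := by
      linear_combination hpMul n
    rw [e4] at key
    calc (Y0 n) ^ 2 = (-(Y0 n)) ^ 2 := by ring
    _ ≤ (M0 n * (lN - p n)) * (lN * Y0 n - Y1 n) := key
  -- the Ritz value R
  obtain ⟨R, hR⟩ : ∃ f : ℕ → ℝ, ∀ k, f k =
      (Real.sqrt ((p k - p (k + 1)) ^ 2 + 4 * (Y0 k / M0 k)) + p k + p (k + 1)) / 2 :=
    ⟨_, fun _ => rfl⟩
  have hsignn : ∀ k, 0 ≤ Y0 k / M0 k := fun k => le_of_lt (div_pos (hY0pos k) (hM0pos k))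
  have hradnn : ∀ k, 0 ≤ (p k - p (k + 1)) ^ 2 + 4 * (Y0 k / M0 k) := fun k => by
    have := hsignn k; nlinarith [sq_nonneg (p k - p (k + 1))]
  have hsig : ∀ k, Y0 k / M0 k ≤ (lN - p k) * (lN - p (k + 1)) := by
    intro k
    have h1 : M0 k * (lN - p k) * (lN * Y0 k - Y1 k) =
        M0 k * (lN - p k) * (lN - p (k + 1)) * Y0 k := by
      linear_combination (M0 k * (lN - p k)) * hqY k
    rw [div_le_iff₀ (hM0pos k)]
    nlinarith [hCS k, h1, hY0pos k]
  have hub : ∀ k, R k ≤ lN := by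
    intro k
    have h1 := hpN k
    have h2 := hpN (k + 1)
    have h3 := hp1 k
    have h4 := hp1 (k + 1)
    have hsq : (p k - p (k + 1)) ^ 2 + 4 * (Y0 k / M0 k) ≤ (2 * lN - p k - p (k + 1)) ^ 2 := by
      nlinarith [hsig k]
    have h5 := Real.sqrt_le_sqrt hsq
    rw [Real.sqrt_sq (by linarith)] at h5
    rw [hR]; linarith
  have hRp : ∀ k, p k ≤ R k ∧ p (k + 1) ≤ R k := by
    intro k
    have h1 : (p k - p (k + 1)) ^ 2 ≤ (p k - p (k + 1)) ^ 2 + 4 * (Y0 k / M0 k) := by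
      have := hsignn k; linarith
    have h2 := Real.sqrt_le_sqrt h1
    rw [Real.sqrt_sq_eq_abs] at h2
    have h3 := le_abs_self (p k - p (k + 1))
    have h4 := neg_abs_le (p k - p (k + 1))
    constructor
    · rw [hR]; linarith
    · rw [hR]; linarith
  have hroot : ∀ k, (R k - p k) * (R k - p (k + 1)) = Y0 k / M0 k := by
    intro k
    have hs := Real.sq_sqrt (hradnn k)
    rw [hR]
    linear_combination hs / 4
  -- lower bound via test vector
  have hkey : ∀ k, Z1 k ≤ R k * Z0 k := by
    intro k
    have hXnn : 0 ≤ R k - p k := by linarith [(hRp k).1]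
    have hYnn : 0 ≤ R k - p (k + 1) := by linarith [(hRp k).2]
    set σ : ℝ := Real.sqrt (Y0 k / M0 k) with hσdef
    have hσ2 : σ ^ 2 = Y0 k / M0 k := Real.sq_sqrt (hsignn k)
    have hσXY : σ = Real.sqrt (R k - p k) * Real.sqrt (R k - p (k + 1)) := by
      rw [← Real.sqrt_mul hXnn, hroot k]
    set c1 : ℝ := (p k - l1) * Real.sqrt (M0 k) with hc1def
    set c2 : ℝ := -Real.sqrt (Y0 k) with hc2def
    have hc1sq : c1 ^ 2 = (p k - l1) ^ 2 * M0 k := by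
      rw [hc1def, mul_pow, Real.sq_sqrt (le_of_lt (hM0pos k))]
    have hc2sq : c2 ^ 2 = Y0 k := by
      rw [hc2def, neg_pow, Real.sq_sqrt (le_of_lt (hY0pos k))]
      ring
    have id1 : c1 ^ 2 + c2 ^ 2 = Z0 k := by
      rw [hc1sq, hc2sq, hZ0closed k, hY0 k]
      linear_combination (2 * p k - 2 * l1) * hpMul k
    have hsM0 : σ * Real.sqrt (M0 k) = Real.sqrt (Y0 k) := by
      rw [hσdef, Real.sqrt_div (le_of_lt (hY0pos k)),
        div_mul_cancel₀ _ (ne_of_gt (Real.sqrt_pos.2 (hM0pos k)))]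
    have id2 : p k * c1 ^ 2 - 2 * σ * c1 * c2 + p (k + 1) * c2 ^ 2 = Z1 k := by
      have e5 : σ * c1 * c2 = -((p k - l1) * Y0 k) := by
        rw [hc1def, hc2def]
        have e5a : σ * ((p k - l1) * Real.sqrt (M0 k)) * -Real.sqrt (Y0 k) =
            -((p k - l1) * (σ * Real.sqrt (M0 k) * Real.sqrt (Y0 k))) := by ring
        rw [e5a, hsM0, Real.mul_self_sqrt (le_of_lt (hY0pos k))]
      have e6 : p (k + 1) * Y0 k = Y1 k := hqY k
      rw [hZ1closed k]
      have e7 := hY0 k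
      have e8 := hY1 k
      linear_combination (p k) * hc1sq + (p (k + 1)) * hc2sq - 2 * e5 + e6 + e8 +
        (2 * p k - 2 * l1) * e7 + (3 * p k ^ 2 - 4 * p k * l1 + l1 ^ 2) * hpMul k
    have id3 : p k * c1 ^ 2 - 2 * σ * c1 * c2 + p (k + 1) * c2 ^ 2 ≤
        R k * (c1 ^ 2 + c2 ^ 2) := by
      have hsq := sq_nonneg (Real.sqrt (R k - p k) * c1 + Real.sqrt (R k - p (k + 1)) * c2)
      have hx2 := Real.sq_sqrt hXnn
      have hy2 := Real.sq_sqrt hYnn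
      have hexp : (Real.sqrt (R k - p k) * c1 + Real.sqrt (R k - p (k + 1)) * c2) ^ 2 =
          Real.sqrt (R k - p k) ^ 2 * c1 ^ 2 +
            2 * ((Real.sqrt (R k - p k) * Real.sqrt (R k - p (k + 1))) * (c1 * c2)) +
            Real.sqrt (R k - p (k + 1)) ^ 2 * c2 ^ 2 := by ring
      rw [hexp, hx2, hy2, ← hσXY] at hsq
      nlinarith [hsq]
    rw [← id1, ← id2]
    exact id3
  have hZchain : ∀ k, lN * Z0 k - Z1 k ≤ (lN - l1) * DD k := by
    intro k
    have e : lN * Z0 k - Z1 k =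
        ∑ j, (lam j * z k j ^ 2) * ((lam j - l1) ^ 2 * (lN - lam j)) := by
      rw [hZ0, hZ1, Finset.mul_sum, ← Finset.sum_sub_distrib]
      exact Finset.sum_congr rfl fun j _ => by ring
    have e2 : (lN - l1) * DD k =
        ∑ j, (lam j * z k j ^ 2) * ((lN - l1) * ((lam j - l1) * (lN - lam j))) := by
      rw [hDD, Finset.mul_sum]
      exact Finset.sum_congr rfl fun j _ => by ring
    rw [e, e2]
    apply Finset.sum_le_sum
    intro j _
    have h1 := (hrange j).1
    have h2 := (hrange j).2
    have h3 := hwnn k j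
    apply mul_le_mul_of_nonneg_left _ h3
    nlinarith [mul_nonneg (sub_nonneg.2 h1) (sq_nonneg (lN - lam j))]
  have hZ0geq : ∀ k, (lN * z k iN ^ 2) * (lN - l1) ^ 2 ≤ Z0 k := by
    intro k
    rw [hZ0]
    exact Finset.single_le_sum
      (f := fun j => (lam j * z k j ^ 2) * (lam j - l1) ^ 2)
      (fun j _ => mul_nonneg (hwnn k j) (sq_nonneg _)) (Finset.mem_univ iN)
  -- the monotone Lyapunov quantity cc = q1 * qN
  obtain ⟨cc, hcc⟩ : ∃ f : ℕ → ℝ, ∀ n,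
      f n = (l1 * z n i0 ^ 2) * (lN * z n iN ^ 2) / (M0 n) ^ 2 := ⟨_, fun _ => rfl⟩
  have hccpos : ∀ n, 0 < cc n := by
    intro n
    rw [hcc]
    have h1 : 0 < l1 * z n i0 ^ 2 := mul_pos hl1pos (pow_two_pos_of_ne_zero (persist n).1)
    have h2 : 0 < lN * z n iN ^ 2 :=
      mul_pos (lt_trans hl1pos hl1N) (pow_two_pos_of_ne_zero (persist n).2)
    exact div_pos (mul_pos h1 h2) (pow_pos (hM0pos n) 2)
  have hM0n1 : ∀ n, M0 (n + 1) = Y0 n / p n ^ 2 := by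
    intro n
    rw [hY0M n, mul_comm, mul_div_assoc,
      div_self (pow_ne_zero 2 (ne_of_gt (hppos n))), mul_one]
  have hccrec : ∀ n, cc (n + 1) = cc n * ((p n - l1) * (lN - p n) * M0 n / Y0 n) ^ 2 := by
    intro n
    have h0 := ne_of_gt (hM0pos n)
    have h1 := ne_of_gt (hM1pos n)
    have hY := ne_of_gt (hY0pos n)
    have e1 : p n * M0 n = M1 n := hpMul n
    rw [hcc (n + 1), hcc n, hrec' n i0, hrec' n iN, hM0n1 n, hp n]
    field_simp
    ring
  have htfac : ∀ n, 1 ≤ (p n - l1) * (lN - p n) * M0 n / Y0 n := fun n =>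
    (one_le_div (hY0pos n)).2 (hBh n)
  have hccmono : Monotone cc := by
    apply monotone_nat_of_le_succ
    intro n
    rw [hccrec n]
    have h1 : (1:ℝ) ≤ ((p n - l1) * (lN - p n) * M0 n / Y0 n) ^ 2 := by
      nlinarith [htfac n]
    nlinarith [hccpos n, h1]
  have hccle1 : ∀ n, cc n ≤ 1 := by
    intro n
    have hw1le : l1 * z n i0 ^ 2 ≤ M0 n := by
      rw [hM0]
      exact Finset.single_le_sum (f := fun j => lam j * z n j ^ 2)
        (fun j _ => hwnn n j) (Finset.mem_univ i0)
    have hwNle : lN * z n iN ^ 2 ≤ M0 n := by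
      rw [hM0]
      exact Finset.single_le_sum (f := fun j => lam j * z n j ^ 2)
        (fun j _ => hwnn n j) (Finset.mem_univ iN)
    rw [hcc, div_le_one (pow_pos (hM0pos n) 2)]
    have h1 : 0 ≤ l1 * z n i0 ^ 2 := le_of_lt (mul_pos hl1pos (pow_two_pos_of_ne_zero (persist n).1))
    have h2 : 0 ≤ lN * z n iN ^ 2 :=
      le_of_lt (mul_pos (lt_trans hl1pos hl1N) (pow_two_pos_of_ne_zero (persist n).2))
    nlinarith [hM0pos n]
  have hbdd : BddAbove (Set.range cc) := ⟨1, by rintro _ ⟨n, rfl⟩; exact hccle1 n⟩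
  have hLtend : Tendsto cc atTop (𝓝 (⨆ n, cc n)) := tendsto_atTop_ciSup hccmono hbdd
  have hLpos : 0 < ⨆ n, cc n := lt_of_lt_of_le (hccpos 0) (le_ciSup hbdd 0)
  -- DD/Y0 tends to zero
  have hepsnn : ∀ k, 0 ≤ DD k / Y0 k := fun k => div_nonneg (hDDnonneg k) (le_of_lt (hY0pos k))
  have heps : Tendsto (fun k => DD k / Y0 k) atTop (𝓝 0) := by
    have hshift : Tendsto (fun k => cc (k + 1)) atTop (𝓝 (⨆ n, cc n)) :=
      (tendsto_add_atTop_iff_nat 1).2 hLtend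
    have hdiv : Tendsto (fun k => cc (k + 1) / cc k) atTop (𝓝 1) := by
      have h := hshift.div hLtend (ne_of_gt hLpos)
      rwa [div_self (ne_of_gt hLpos)] at h
    have hdiv1 : Tendsto (fun k => cc (k + 1) / cc k - 1) atTop (𝓝 0) := by
      have h := hdiv.sub_const 1
      simpa using h
    apply tendsto_of_tendsto_of_tendsto_of_le_of_le tendsto_const_nhds hdiv1 hepsnn
    intro k
    show DD k / Y0 k ≤ cc (k + 1) / cc k - 1
    have e1 : cc (k + 1) / cc k = ((p k - l1) * (lN - p k) * M0 k / Y0 k) ^ 2 := by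
      rw [hccrec k, mul_comm, mul_div_assoc, div_self (ne_of_gt (hccpos k)), mul_one]
    have e2 : DD k / Y0 k = (p k - l1) * (lN - p k) * M0 k / Y0 k - 1 := by
      rw [hDDid k, sub_div, div_self (ne_of_gt (hY0pos k))]
    rw [e1, e2]
    nlinarith [htfac k]
  -- lower bound chain
  have hY0le : ∀ k, Y0 k ≤ (lN - l1) ^ 2 * M0 k := by
    intro k
    rw [hY0sum k, hM0 k, Finset.mul_sum]
    apply Finset.sum_le_sum
    intro j _
    have h1 := (hrange j).1
    have h2 := (hrange j).2
    have h3 := hp1 k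
    have h4 := hpN k
    have h5 := hwnn k j
    calc lam j * z k j ^ 2 * (lam j - p k) ^ 2 ≤ lam j * z k j ^ 2 * (lN - l1) ^ 2 := by
          apply mul_le_mul_of_nonneg_left _ h5
          nlinarith
    _ = (lN - l1) ^ 2 * (lam j * z k j ^ 2) := by ring
  have hwNge : ∀ k, cc 0 * M0 k ≤ lN * z k iN ^ 2 := by
    intro k
    have h1 : cc 0 ≤ cc k := hccmono (Nat.zero_le k)
    have h2 : cc k ≤ lN * z k iN ^ 2 / M0 k := by
      rw [hcc k]
      rw [div_le_div_iff₀ (pow_pos (hM0pos k) 2) (hM0pos k)]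
      have hw1le : l1 * z k i0 ^ 2 ≤ M0 k := by
        rw [hM0]
        exact Finset.single_le_sum (f := fun j => lam j * z k j ^ 2)
          (fun j _ => hwnn k j) (Finset.mem_univ i0)
      have h3 : 0 ≤ lN * z k iN ^ 2 :=
        le_of_lt (mul_pos (lt_trans hl1pos hl1N) (pow_two_pos_of_ne_zero (persist k).2))
      nlinarith [mul_nonneg (mul_nonneg h3 (le_of_lt (hM0pos k))) (sub_nonneg.2 hw1le)]
    have h4 : cc 0 ≤ lN * z k iN ^ 2 / M0 k := le_trans h1 h2
    rw [← le_div_iff₀ (hM0pos k)]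
    exact h4
  have hZ0Y0 : ∀ k, cc 0 * Y0 k ≤ Z0 k := by
    intro k
    have h1 : cc 0 * Y0 k ≤ cc 0 * ((lN - l1) ^ 2 * M0 k) :=
      mul_le_mul_of_nonneg_left (hY0le k) (le_of_lt (hccpos 0))
    have h2 : cc 0 * ((lN - l1) ^ 2 * M0 k) = (cc 0 * M0 k) * (lN - l1) ^ 2 := by ring
    have h3 : (cc 0 * M0 k) * (lN - l1) ^ 2 ≤ (lN * z k iN ^ 2) * (lN - l1) ^ 2 :=
      mul_le_mul_of_nonneg_right (hwNge k) (sq_nonneg _)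
    calc cc 0 * Y0 k ≤ (lN * z k iN ^ 2) * (lN - l1) ^ 2 := by linarith
    _ ≤ Z0 k := hZ0geq k
  have hlb : ∀ k, lN - ((lN - l1) / cc 0) * (DD k / Y0 k) ≤ R k := by
    intro k
    have h1 : (lN - R k) * Z0 k ≤ (lN - l1) * DD k := by
      have := hkey k
      have := hZchain k
      nlinarith
    have h2 : 0 ≤ lN - R k := by linarith [hub k]
    have h3 : (lN - R k) * (cc 0 * Y0 k) ≤ (lN - R k) * Z0 k :=
      mul_le_mul_of_nonneg_left (hZ0Y0 k) h2
    have h4 : (lN - R k) * (cc 0 * Y0 k) ≤ (lN - l1) * DD k := le_trans h3 h1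
    have h5 : 0 < cc 0 * Y0 k := mul_pos (hccpos 0) (hY0pos k)
    have h6 : lN - R k ≤ ((lN - l1) * DD k) / (cc 0 * Y0 k) := (le_div_iff₀ h5).2 h4
    have h7 : ((lN - l1) * DD k) / (cc 0 * Y0 k) = ((lN - l1) / cc 0) * (DD k / Y0 k) := by
      field_simp
    linarith [h6, h7.symm.le, h7.le]
  -- R tends to lN
  have hRtend : Tendsto R atTop (𝓝 lN) := by
    have hlow : Tendsto (fun k => lN - ((lN - l1) / cc 0) * (DD k / Y0 k)) atTop (𝓝 lN) := by
      have h1 : Tendsto (fun k => ((lN - l1) / cc 0) * (DD k / Y0 k)) atTop (𝓝 0) := by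
        have := heps.const_mul ((lN - l1) / cc 0)
        simpa using this
      have h2 := Tendsto.const_sub lN h1
      simpa using h2
    exact tendsto_of_tendsto_of_tendsto_of_le_of_le hlow tendsto_const_nhds hlb hub
  -- final conversion
  have hlNpos : 0 < lN := lt_trans hl1pos hl1N
  have hinv : Tendsto (fun k => (R k)⁻¹) atTop (𝓝 lN⁻¹) := hRtend.inv₀ (ne_of_gt hlNpos)
  have ha' : ∀ n, a n = M0 n / M1 n := fun n => by rw [ha n, ← hM0 n, ← hM1 n]
  have hainv : ∀ n, 1 / a n = p n := fun n => by
    rw [ha' n, hp n, one_div_div]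
  have hGM : ∀ n, G n = M0 n := fun n => by rw [hG n, ← hM0 n]
  have hterm : ∀ k, 4 * G (k + 1) / (a k ^ 2 * G k) = 4 * (Y0 k / M0 k) := by
    intro k
    have h0 := ne_of_gt (hM0pos k)
    have h1 := ne_of_gt (hM1pos k)
    rw [hGM, hGM, ha' k, hM0n1 k, hp k]
    field_simp
  have hgoal : (1:ℝ) / lam ⟨N - 1, hN1⟩ = lN⁻¹ := by
    rw [one_div]
  rw [show (nhds (1 / lam ⟨N - 1, hN1⟩)) = 𝓝 lN⁻¹ by rw [hgoal]]
  refine (tendsto_add_atTop_iff_nat 1).1 ?_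
  refine hinv.congr fun k => ?_
  simp only [Nat.add_sub_cancel]
  rw [hainv k, hainv (k + 1), hterm k, hR k, inv_div, div_eq_mul_inv]


theorem mg_Y2_steplength_limit
    (N : ℕ) (hN : 2 ≤ N)
    (A : Matrix (Fin N) (Fin N) ℝ) (b : Fin N → ℝ)
    (hA : A.PosDef)
    (lam : Fin N → ℝ) (v : Fin N → Fin N → ℝ)
    (hlam0 : 0 < lam ⟨0, by omega⟩)
    (hmono : StrictMono lam)
    (heig : ∀ i, A.mulVec (v i) = lam i • v i)
    (horth : ∀ i j, v i ⬝ᵥ v j = if i = j then (1 : ℝ) else 0)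
    (x g : ℕ → Fin N → ℝ) (alpha : ℕ → ℝ)
    (hg : ∀ n, g n = A.mulVec (x n) - b)
    (halpha : ∀ n, alpha n =
      (g n ⬝ᵥ A.mulVec (g n)) / (g n ⬝ᵥ A.mulVec (A.mulVec (g n))))
    (hx : ∀ n, x (n + 1) = x n - alpha n • g n)
    (zeta : ℕ → Fin N → ℝ)
    (hzeta : ∀ n, g n = ∑ i, zeta n i • v i)
    (hz1 : zeta 0 ⟨0, by omega⟩ ≠ 0)
    (hzN : zeta 0 ⟨N - 1, by omega⟩ ≠ 0) :
    Tendsto (fun n => 2 * (Real.sqrt ((1 / alpha (n - 1) - 1 / alpha n) ^ 2 +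
          4 * (g n ⬝ᵥ A.mulVec (g n)) /
            ((alpha (n - 1)) ^ 2 * (g (n - 1) ⬝ᵥ A.mulVec (g (n - 1))))) +
        1 / alpha (n - 1) + 1 / alpha n)⁻¹) atTop
      (𝓝 (1 / lam ⟨N - 1, by omega⟩)) := by
  have hlampos : ∀ i, 0 < lam i := by
    intro i
    refine lt_of_lt_of_le hlam0 (hmono.monotone ?_)
    simp [Fin.le_def]
  -- dot product expansion lemmas
  have key : ∀ (c w : Fin N → ℝ),
      dotProduct (∑ j, c j • v j) w = ∑ j, c j * dotProduct (v j) w := by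
    intro c w
    simp only [dotProduct, Finset.sum_apply, Pi.smul_apply, smul_eq_mul,
      Finset.sum_mul, Finset.mul_sum]
    rw [Finset.sum_comm]
    exact Finset.sum_congr rfl fun j _ => Finset.sum_congr rfl fun i _ => by ring
  have hcoord : ∀ (c : Fin N → ℝ) (i : Fin N), (∑ j, c j • v j) ⬝ᵥ v i = c i := by
    intro c i
    rw [key]
    simp only [horth, mul_ite, mul_one, mul_zero]
    simp [Finset.sum_ite_eq']
  have hdot2 : ∀ (c e : Fin N → ℝ),
      (∑ j, c j • v j) ⬝ᵥ (∑ j, e j • v j) = ∑ j, c j * e j := by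
    intro c e
    rw [key]
    refine Finset.sum_congr rfl fun j _ => ?_
    rw [dotProduct_comm, hcoord]
  have hmul : ∀ (c : Fin N → ℝ),
      A.mulVec (∑ j, c j • v j) = ∑ j, (c j * lam j) • v j := by
    intro c
    have h1 : A.mulVec (∑ j, c j • v j) = ∑ j, c j • A.mulVec (v j) := by
      simp only [← Matrix.mulVecLin_apply, map_sum, LinearMap.map_smul]
    rw [h1]
    refine Finset.sum_congr rfl fun j _ => ?_
    rw [heig j, smul_smul]
  have hAg : ∀ n, A.mulVec (g n) = ∑ j, (zeta n j * lam j) • v j := by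
    intro n
    rw [hzeta n, hmul]
  have hA2g : ∀ n, A.mulVec (A.mulVec (g n)) = ∑ j, (zeta n j * lam j * lam j) • v j := by
    intro n
    rw [hAg n, hmul]
  have hdotAg : ∀ n, g n ⬝ᵥ A.mulVec (g n) = ∑ j, lam j * zeta n j ^ 2 := by
    intro n
    rw [hAg n, hzeta n, hdot2]
    exact Finset.sum_congr rfl fun j _ => by ring
  have hdotA2g : ∀ n, g n ⬝ᵥ A.mulVec (A.mulVec (g n)) = ∑ j, lam j ^ 2 * zeta n j ^ 2 := by
    intro n
    rw [hA2g n, hzeta n, hdot2]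
    exact Finset.sum_congr rfl fun j _ => by ring
  have halpha' : ∀ n, alpha n =
      (∑ j, lam j * zeta n j ^ 2) / (∑ j, lam j ^ 2 * zeta n j ^ 2) := by
    intro n
    rw [halpha n, hdotAg n, hdotA2g n]
  have hgrec : ∀ n, g (n + 1) = g n - alpha n • A.mulVec (g n) := by
    intro n
    rw [hg (n + 1), hx n, Matrix.mulVec_sub, Matrix.mulVec_smul, hg n]
    abel
  have hzrec : ∀ n i, zeta (n + 1) i = (1 - alpha n * lam i) * zeta n i := by
    intro n i
    have c_left : g (n + 1) ⬝ᵥ v i = zeta (n + 1) i := by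
      rw [hzeta (n + 1)]; exact hcoord _ i
    have c_right : g (n + 1) ⬝ᵥ v i = (1 - alpha n * lam i) * zeta n i := by
      rw [hgrec n, sub_dotProduct, smul_dotProduct, hAg n, hcoord]
      have h1 : g n ⬝ᵥ v i = zeta n i := by rw [hzeta n]; exact hcoord _ i
      rw [h1, smul_eq_mul]
      ring
    rw [← c_left, c_right]
  have hrecfinal : ∀ n i, zeta (n + 1) i =
      (1 - (∑ j, lam j * zeta n j ^ 2) / (∑ j, lam j ^ 2 * zeta n j ^ 2) * lam i) *
        zeta n i := by
    intro n i
    rw [hzrec n i, halpha' n]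
  exact mgY2_aux N hN lam hmono hlampos zeta hrecfinal hz1 hzN alpha halpha'
    (fun n => g n ⬝ᵥ A.mulVec (g n)) hdotAg
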